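/- Let P be a curve of m points in ℝ^d, let k ∈ {1,…,m}, and let Π be an optimal k-simplification of P, i.e., Π has at most k points and dFr(P,Π) ≤ dFr(P,Π') for every curve Π' of at most k points. Then there exist points x, y ∈ P such that (1/2)·‖x−y‖ ≤ dFr(P,Π) ≤ (1/√2)·‖x−y‖. -/

import Mathlib

noncomputable section

abbrev Pt (d : ℕ) : Type := EuclideanSpace ℝ (Fin d)

/-- Cost contribution of a single pair of blocks: the maximum distance between a point
of `A` and a point of `B` (0 if one of them is empty). -/
def pairCost {d : ℕ} (A B : List (Pt d)) : ℝ :=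
  (A.map fun p => (B.map fun q => dist p q).foldr max 0).foldr max 0

/-- `ω` is a paired walk along `P` and `Q`: the first components partition `P` into
consecutive nonempty blocks, the second components partition `Q`, and in each pair at
least one block is a single point. -/
def IsPairedWalk {d : ℕ} (ω : List (List (Pt d) × List (Pt d))) (P Q : List (Pt d)) : Prop :=
  (ω.map Prod.fst).flatten = P ∧ (ω.map Prod.snd).flatten = Q ∧
    ∀ pr ∈ ω, pr.1 ≠ [] ∧ pr.2 ≠ [] ∧ (pr.1.length = 1 ∨ pr.2.length = 1)

/-- The cost of a paired walk: the maximum over its pairs of the maximum distance between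
matched points. -/
def walkCost {d : ℕ} (ω : List (List (Pt d) × List (Pt d))) : ℝ :=
  (ω.map fun pr => pairCost pr.1 pr.2).foldr max 0

/-- The discrete Fréchet distance: the minimum cost over all paired walks along `P` and `Q`. -/
def dFr {d : ℕ} (P Q : List (Pt d)) : ℝ :=
  sInf {c : ℝ | ∃ ω, IsPairedWalk ω P Q ∧ walkCost ω = c}

set_option maxHeartbeats 1000000

open scoped RealInnerProductSpace

namespace FrAux

/-! ### foldr max lemmas -/

lemma foldr_max_nonneg (l : List ℝ) : 0 ≤ l.foldr max 0 := by
  induction l with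
  | nil => simp
  | cons a l ih => exact le_trans ih (le_max_right _ _)

lemma le_foldr_max {l : List ℝ} {a : ℝ} (h : a ∈ l) : a ≤ l.foldr max 0 := by
  induction l with
  | nil => simp at h
  | cons b l ih =>
    rcases List.mem_cons.1 h with h | h
    · subst h; exact le_max_left _ _
    · exact le_trans (ih h) (le_max_right _ _)

lemma foldr_max_le {l : List ℝ} {b : ℝ} (hb : 0 ≤ b) (h : ∀ a ∈ l, a ≤ b) :
    l.foldr max 0 ≤ b := by
  induction l with
  | nil => simpa
  | cons a l ih => exact max_le (h a (by simp)) (ih fun x hx => h x (by simp [hx]))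

lemma foldr_max_eq (l : List ℝ) : l.foldr max 0 = 0 ∨ l.foldr max 0 ∈ l := by
  induction l with
  | nil => simp
  | cons a l ih =>
    rcases le_total a (l.foldr max 0) with h | h
    · rw [List.foldr_cons, max_eq_right h]
      rcases ih with h0 | hm
      · exact Or.inl h0
      · exact Or.inr (List.mem_cons.2 (Or.inr hm))
    · rw [List.foldr_cons, max_eq_left h]
      exact Or.inr (by simp)

variable {d : ℕ}

/-! ### pairCost and walkCost lemmas -/

lemma pairCost_nonneg (A B : List (Pt d)) : 0 ≤ pairCost A B := foldr_max_nonneg _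

lemma dist_le_pairCost {A B : List (Pt d)} {p q : Pt d} (hp : p ∈ A) (hq : q ∈ B) :
    dist p q ≤ pairCost A B := by
  refine le_trans ?_ (le_foldr_max (l := A.map fun p => (B.map fun q => dist p q).foldr max 0)
    (List.mem_map_of_mem hp))
  exact le_foldr_max (List.mem_map_of_mem hq)

lemma pairCost_le {A B : List (Pt d)} {b : ℝ} (hb : 0 ≤ b)
    (h : ∀ p ∈ A, ∀ q ∈ B, dist p q ≤ b) : pairCost A B ≤ b := by
  refine foldr_max_le hb ?_
  intro x hx
  obtain ⟨p, hp, rfl⟩ := List.mem_map.1 hx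
  refine foldr_max_le hb ?_
  intro y hy
  obtain ⟨q, hq, rfl⟩ := List.mem_map.1 hy
  exact h p hp q hq

lemma pairCost_eq (A B : List (Pt d)) :
    pairCost A B = 0 ∨ ∃ p ∈ A, ∃ q ∈ B, pairCost A B = dist p q := by
  rcases foldr_max_eq (A.map fun p => (B.map fun q => dist p q).foldr max 0) with h | h
  · exact Or.inl h
  · obtain ⟨p, hp, hpe⟩ := List.mem_map.1 h
    rcases foldr_max_eq (B.map fun q => dist p q) with h2 | h2
    · exact Or.inl (by rw [pairCost, ← hpe, h2])
    · obtain ⟨q, hq, hqe⟩ := List.mem_map.1 h2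
      exact Or.inr ⟨p, hp, q, hq, by rw [pairCost, ← hpe, ← hqe]⟩

lemma walkCost_nonneg (ω : List (List (Pt d) × List (Pt d))) : 0 ≤ walkCost ω :=
  foldr_max_nonneg _

lemma pairCost_le_walkCost {ω : List (List (Pt d) × List (Pt d))} {pr} (h : pr ∈ ω) :
    pairCost pr.1 pr.2 ≤ walkCost ω :=
  le_foldr_max (List.mem_map_of_mem h)

lemma walkCost_le {ω : List (List (Pt d) × List (Pt d))} {b : ℝ} (hb : 0 ≤ b)
    (h : ∀ pr ∈ ω, pairCost pr.1 pr.2 ≤ b) : walkCost ω ≤ b := by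
  refine foldr_max_le hb ?_
  intro x hx
  obtain ⟨pr, hpr, rfl⟩ := List.mem_map.1 hx
  exact h pr hpr

lemma walkCost_eq (ω : List (List (Pt d) × List (Pt d))) :
    walkCost ω = 0 ∨ ∃ pr ∈ ω, walkCost ω = pairCost pr.1 pr.2 := by
  rcases foldr_max_eq (ω.map fun pr => pairCost pr.1 pr.2) with h | h
  · exact Or.inl h
  · obtain ⟨pr, hpr, he⟩ := List.mem_map.1 h
    exact Or.inr ⟨pr, hpr, he.symm⟩

/-! ### dFr basic lemmas -/

lemma exists_walk : ∀ (P Q : List (Pt d)), P ≠ [] → Q ≠ [] → ∃ ω, IsPairedWalk ω P Q := by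
  intro P
  induction P with
  | nil => intro Q h; simp at h
  | cons p P ih =>
    intro Q _ hQ
    rcases P with _ | ⟨p', P'⟩
    · exact ⟨[([p], Q)], by simp [IsPairedWalk, hQ]⟩
    · rcases Q with _ | ⟨q, Q'⟩
      · simp at hQ
      · rcases Q' with _ | ⟨q', Q''⟩
        · exact ⟨[(p :: p' :: P', [q])], by simp [IsPairedWalk]⟩
        · obtain ⟨ω, h1, h2, h3⟩ := ih (q' :: Q'') (by simp) (by simp)
          refine ⟨([p], [q]) :: ω, ?_, ?_, ?_⟩
          · simp [h1]
          · simp [h2]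
          · intro pr hpr
            rcases List.mem_cons.1 hpr with rfl | hpr
            · simp
            · exact h3 pr hpr

lemma dFr_set_nonempty {P Q : List (Pt d)} (hP : P ≠ []) (hQ : Q ≠ []) :
    {c : ℝ | ∃ ω, IsPairedWalk ω P Q ∧ walkCost ω = c}.Nonempty := by
  obtain ⟨ω, hω⟩ := exists_walk P Q hP hQ
  exact ⟨walkCost ω, ω, hω, rfl⟩

lemma dFr_bddBelow (P Q : List (Pt d)) :
    BddBelow {c : ℝ | ∃ ω, IsPairedWalk ω P Q ∧ walkCost ω = c} := by
  refine ⟨0, ?_⟩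
  rintro c ⟨ω, _, rfl⟩
  exact walkCost_nonneg ω

lemma dFr_le_walkCost {P Q : List (Pt d)} {ω} (h : IsPairedWalk ω P Q) :
    dFr P Q ≤ walkCost ω :=
  csInf_le (dFr_bddBelow P Q) ⟨ω, h, rfl⟩

lemma mem_of_mem_block {ω : List (List (Pt d) × List (Pt d))} {P Q : List (Pt d)}
    (h : IsPairedWalk ω P Q) {pr} (hpr : pr ∈ ω) {p : Pt d} (hp : p ∈ pr.1) : p ∈ P := by
  rw [← h.1]
  exact List.mem_flatten.2 ⟨pr.1, List.mem_map_of_mem hpr, hp⟩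

lemma mem_of_mem_block' {ω : List (List (Pt d) × List (Pt d))} {P Q : List (Pt d)}
    (h : IsPairedWalk ω P Q) {pr} (hpr : pr ∈ ω) {q : Pt d} (hq : q ∈ pr.2) : q ∈ Q := by
  rw [← h.2.1]
  exact List.mem_flatten.2 ⟨pr.2, List.mem_map_of_mem hpr, hq⟩

lemma cost_set_finite (P Q : List (Pt d)) :
    {c : ℝ | ∃ ω, IsPairedWalk ω P Q ∧ walkCost ω = c}.Finite := by
  have hF : (insert (0:ℝ) ((fun pq : Pt d × Pt d => dist pq.1 pq.2) ''
      ({p | p ∈ P} ×ˢ {q | q ∈ Q}))).Finite :=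
    Set.Finite.insert 0 (Set.Finite.image _ (Set.Finite.prod P.finite_toSet Q.finite_toSet))
  refine hF.subset ?_
  rintro c ⟨ω, hω, rfl⟩
  rcases walkCost_eq ω with h0 | ⟨pr, hpr, he⟩
  · rw [h0]; exact Set.mem_insert _ _
  · rcases pairCost_eq pr.1 pr.2 with h0 | ⟨p, hp, q, hq, he2⟩
    · rw [he, h0]; exact Set.mem_insert _ _
    · refine Set.mem_insert_of_mem _ ⟨(p, q), ⟨mem_of_mem_block hω hpr hp,
        mem_of_mem_block' hω hpr hq⟩, ?_⟩
      rw [he, he2]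

lemma exists_optimal_walk {P Q : List (Pt d)} (hP : P ≠ []) (hQ : Q ≠ []) :
    ∃ ω, IsPairedWalk ω P Q ∧ walkCost ω = dFr P Q :=
  Set.Nonempty.csInf_mem (dFr_set_nonempty hP hQ) (cost_set_finite P Q)

/-! ### radius function and a Jung-type lemma -/

def radFn (L : List (Pt d)) (c : Pt d) : ℝ := (L.map fun p => dist p c).foldr max 0

lemma radFn_nonneg (L : List (Pt d)) (c : Pt d) : 0 ≤ radFn L c := foldr_max_nonneg _

lemma dist_le_radFn {L : List (Pt d)} {p : Pt d} (hp : p ∈ L) (c : Pt d) :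
    dist p c ≤ radFn L c := le_foldr_max (List.mem_map_of_mem hp)

lemma radFn_le {L : List (Pt d)} {c : Pt d} {b : ℝ} (hb : 0 ≤ b)
    (h : ∀ p ∈ L, dist p c ≤ b) : radFn L c ≤ b := by
  refine foldr_max_le hb ?_
  intro x hx
  obtain ⟨p, hp, rfl⟩ := List.mem_map.1 hx
  exact h p hp

lemma radFn_continuous (L : List (Pt d)) : Continuous (radFn L) := by
  induction L with
  | nil => exact (continuous_const : Continuous fun _ : Pt d => (0:ℝ))
  | cons p L ih =>
    have : radFn (p :: L) = fun c => max (dist p c) (radFn L c) := by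
      funext c; simp [radFn]
    rw [this]
    exact Continuous.max (continuous_const.dist continuous_id) ih

lemma exists_radFn_min (L : List (Pt d)) (hL : L ≠ []) :
    ∃ c₀ : Pt d, ∀ c : Pt d, radFn L c₀ ≤ radFn L c := by
  set p₀ := L.head hL with hp₀def
  have hp₀ : p₀ ∈ L := L.head_mem hL
  set R := radFn L p₀ with hR
  have hR0 : 0 ≤ R := radFn_nonneg _ _
  have hK : IsCompact (Metric.closedBall p₀ (2*R+1)) := isCompact_closedBall _ _
  have hne : (Metric.closedBall p₀ (2*R+1)).Nonempty :=
    ⟨p₀, by simp [Metric.mem_closedBall]; linarith⟩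
  obtain ⟨c₀, hc₀mem, hmin⟩ := hK.exists_isMinOn hne (radFn_continuous L).continuousOn
  refine ⟨c₀, fun c => ?_⟩
  by_cases hc : c ∈ Metric.closedBall p₀ (2*R+1)
  · exact hmin hc
  · have h1 : radFn L c₀ ≤ R :=
      hmin (by simp [Metric.mem_closedBall]; linarith : p₀ ∈ Metric.closedBall p₀ (2*R+1))
    have h2 : dist p₀ c ≤ radFn L c := dist_le_radFn hp₀ c
    have h3 : 2*R+1 < dist c p₀ := by
      simpa [Metric.mem_closedBall] using hc
    rw [dist_comm] at h3
    linarith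

/-- A Jung-type lemma: every finite nonempty family of points admits a center whose
distance to all points is at most `diam / √2`. -/
lemma jung (L : List (Pt d)) (hL : L ≠ []) :
    ∃ x ∈ L, ∃ y ∈ L, ∃ c : Pt d, ∀ p ∈ L, dist p c ≤ dist x y / Real.sqrt 2 := by
  have hs2 : (0:ℝ) < Real.sqrt 2 := Real.sqrt_pos.2 (by norm_num)
  have hs2sq : Real.sqrt 2 ^ 2 = 2 := Real.sq_sqrt (by norm_num)
  set pairs := (L.product L).map fun pq => dist pq.1 pq.2 with hpairs
  set D := pairs.foldr max 0 with hD
  have hdistle : ∀ x ∈ L, ∀ y ∈ L, dist x y ≤ D := by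
    intro x hx y hy
    exact le_foldr_max (List.mem_map.2 ⟨(x, y), List.pair_mem_product.2 ⟨hx, hy⟩, rfl⟩)
  set p₀ := L.head hL with hp₀def
  have hp₀ : p₀ ∈ L := L.head_mem hL
  rcases foldr_max_eq pairs with hD0 | hDmem
  · refine ⟨p₀, hp₀, p₀, hp₀, p₀, fun p hp => ?_⟩
    have h1 : dist p p₀ ≤ D := hdistle p hp p₀ hp₀
    have h2 : (0:ℝ) ≤ dist p₀ p₀ / Real.sqrt 2 := by positivity
    rw [hD, hD0] at h1
    calc dist p p₀ ≤ 0 := h1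
    _ ≤ _ := h2
  · obtain ⟨⟨x, y⟩, hxy, hDe⟩ := List.mem_map.1 hDmem
    obtain ⟨hx, hy⟩ := List.pair_mem_product.1 hxy
    obtain ⟨c₀, hc₀⟩ := exists_radFn_min L hL
    set r := radFn L c₀ with hr
    have hr0 : 0 ≤ r := radFn_nonneg _ _
    have hDr : r ≤ D / Real.sqrt 2 := by
      by_contra hcon
      push_neg at hcon
      have hD0 : 0 ≤ D := le_trans dist_nonneg (hdistle x hx y hy)
      have hrpos : 0 < r := lt_of_le_of_lt (by positivity) hcon
      have hDsq : D ^ 2 < 2 * r ^ 2 := by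
        have h1 : D < Real.sqrt 2 * r := by
          rw [div_lt_iff₀ hs2] at hcon
          linarith [hcon]
        have h2 : D * D ≤ D * (Real.sqrt 2 * r) := mul_le_mul_of_nonneg_left h1.le hD0
        have h3 : D * (Real.sqrt 2 * r) < (Real.sqrt 2 * r) * (Real.sqrt 2 * r) :=
          mul_lt_mul_of_pos_right h1 (by positivity)
        nlinarith [hs2sq]
      set γ := 2 * r ^ 2 - D ^ 2 with hγ
      have hγpos : 0 < γ := by simp only [hγ]; linarith
      have : r = 0 ∨ r ∈ L.map fun p => dist p c₀ := foldr_max_eq _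
      rcases this with h0 | hmem
      · exact absurd h0 (ne_of_gt hrpos)
      obtain ⟨p, hp, hpe⟩ := List.mem_map.1 hmem
      set t := min 1 (γ / (2 * r ^ 2)) with ht
      have ht0 : 0 < t := lt_min one_pos (by positivity)
      have ht1 : t ≤ 1 := min_le_left _ _
      have ht2 : t * (2 * r ^ 2) ≤ γ := by
        have := min_le_right 1 (γ / (2 * r ^ 2))
        calc t * (2 * r ^ 2) ≤ γ / (2 * r ^ 2) * (2 * r ^ 2) := by
              apply mul_le_mul_of_nonneg_right this (by positivity)
        _ = γ := by field_simp
      set v := p - c₀ with hv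
      set c₁ := c₀ + t • v with hc₁
      have hvnorm : ‖v‖ = r := by rw [hv, ← dist_eq_norm, hpe]
      have key : ∀ q ∈ L, dist q c₁ ^ 2 ≤ r ^ 2 - t * γ / 2 := by
        intro q hq
        set u := q - c₀ with hu
        have hunorm : ‖u‖ ≤ r := by rw [hu, ← dist_eq_norm]; exact dist_le_radFn hq c₀
        have hun0 : 0 ≤ ‖u‖ := norm_nonneg _
        have hpq : dist p q ≤ D := hdistle p hp q hq
        have hpq0 : 0 ≤ dist p q := dist_nonneg
        have e1 : dist p q ^ 2 = r ^ 2 - 2 * ⟪v, u⟫ + ‖u‖ ^ 2 := by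
          have : p - q = v - u := by rw [hv, hu]; abel
          rw [dist_eq_norm, this, @norm_sub_sq_real, hvnorm]
        have e2 : dist q c₁ ^ 2 = ‖u‖ ^ 2 - 2 * (t * ⟪u, v⟫) + t ^ 2 * r ^ 2 := by
          have h3 : q - c₁ = u - t • v := by rw [hc₁, hu, hv]; abel
          rw [dist_eq_norm, h3, @norm_sub_sq_real, real_inner_smul_right, norm_smul,
            Real.norm_eq_abs, abs_of_nonneg ht0.le, hvnorm]
          ring
        have hu2 : ‖u‖ ^ 2 ≤ r ^ 2 := pow_le_pow_left₀ hun0 hunorm 2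
        have hdsq : dist p q ^ 2 ≤ D ^ 2 := pow_le_pow_left₀ hpq0 hpq 2
        have hiner : ‖u‖ ^ 2 - r ^ 2 + γ ≤ 2 * ⟪v, u⟫ := by
          simp only [hγ]; linarith [e1, hdsq]
        have s1 : t * (‖u‖ ^ 2 - r ^ 2 + γ) ≤ t * (2 * ⟪v, u⟫) :=
          mul_le_mul_of_nonneg_left hiner ht0.le
        have s2 : (1 - t) * ‖u‖ ^ 2 ≤ (1 - t) * r ^ 2 :=
          mul_le_mul_of_nonneg_left hu2 (by linarith)
        have s3 : t * (t * r ^ 2) ≤ t * (γ / 2) :=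
          mul_le_mul_of_nonneg_left (by linarith) ht0.le
        have hcomm : ⟪v, u⟫ = ⟪u, v⟫ := real_inner_comm u v
        rw [e2, ← hcomm]
        nlinarith [s1, s2, s3]
      set b := Real.sqrt (r ^ 2 - t * γ / 2) with hb
      have hb0 : 0 ≤ b := Real.sqrt_nonneg _
      have hble : radFn L c₁ ≤ b := by
        refine radFn_le hb0 fun q hq => ?_
        have := key q hq
        calc dist q c₁ = Real.sqrt (dist q c₁ ^ 2) := (Real.sqrt_sq dist_nonneg).symm
        _ ≤ b := Real.sqrt_le_sqrt this
      have htγ : 0 < t * γ := mul_pos ht0 hγpos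
      have hbr : b < r := by
        rw [hb]
        exact (Real.sqrt_lt' hrpos).2 (sub_lt_self _ (div_pos htγ (by norm_num)))
      exact absurd (hc₀ c₁) (by push_neg; exact lt_of_le_of_lt hble hbr)
    refine ⟨x, hx, y, hy, c₀, fun p hp => ?_⟩
    calc dist p c₀ ≤ r := dist_le_radFn hp c₀
    _ ≤ D / Real.sqrt 2 := hDr
    _ = dist x y / Real.sqrt 2 := by
      have hDxy : dist x y = D := hDe
      rw [hDxy]

open Classical in
/-- Packaged (choice) version of the Jung-type lemma. -/
def jungC (A : List (Pt d)) : Pt d × Pt d × Pt d :=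
  if h : A = [] then (0, 0, 0)
  else ((jung A h).choose, (jung A h).choose_spec.2.choose,
    (jung A h).choose_spec.2.choose_spec.2.choose)

lemma jungC_spec {A : List (Pt d)} (hA : A ≠ []) :
    (jungC A).1 ∈ A ∧ (jungC A).2.1 ∈ A ∧
      ∀ p ∈ A, dist p (jungC A).2.2 ≤ dist (jungC A).1 (jungC A).2.1 / Real.sqrt 2 := by
  rw [jungC, dif_neg hA]
  exact ⟨(jung A hA).choose_spec.1, (jung A hA).choose_spec.2.choose_spec.1,
    (jung A hA).choose_spec.2.choose_spec.2.choose_spec⟩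

lemma flatten_singletons {α β : Type*} (g : α → β) (l : List α) :
    (l.map fun a => [g a]).flatten = l.map g := by
  induction l with
  | nil => simp
  | cons a l ih => simp [ih]

lemma length_le_flatten_length {α : Type*} (l : List (List α)) (h : ∀ A ∈ l, A ≠ []) :
    l.length ≤ l.flatten.length := by
  induction l with
  | nil => simp
  | cons A l ih =>
    have hA : 1 ≤ A.length := by
      have := h A (by simp)
      exact List.length_pos_iff.2 this
    have := ih fun B hB => h B (by simp [hB])
    simp only [List.length_cons, List.flatten_cons, List.length_append]
    omega

end FrAux

open FrAux

/-- For an optimal `k`-simplification `Γ` of `P` there are points `x, y ∈ P` with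
`(1/2)·‖x−y‖ ≤ dFr P Γ ≤ (1/√2)·‖x−y‖`. -/
theorem optimal_simplification_distance_interval {d m : ℕ}
    (P : List (Pt d)) (hPlen : P.length = m) (hm : 1 ≤ m)
    (k : ℕ) (hk1 : 1 ≤ k) (hkm : k ≤ m)
    (Γ : List (Pt d)) (hΓne : Γ ≠ []) (hΓk : Γ.length ≤ k)
    (hopt : ∀ Γ' : List (Pt d), Γ' ≠ [] → Γ'.length ≤ k → dFr P Γ ≤ dFr P Γ') :
    ∃ x ∈ P, ∃ y ∈ P,
      (1/2) * dist x y ≤ dFr P Γ ∧ dFr P Γ ≤ (1 / Real.sqrt 2) * dist x y := by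
  have hs2 : (0:ℝ) < Real.sqrt 2 := Real.sqrt_pos.2 (by norm_num)
  have hPne : P ≠ [] := by
    intro h; rw [h] at hPlen; simp at hPlen; omega
  obtain ⟨ω, hω, hcost⟩ := exists_optimal_walk hPne hΓne
  set δ := dFr P Γ with hδ
  have hδ0 : 0 ≤ δ := by rw [← hcost]; exact walkCost_nonneg ω
  have hωne : ω ≠ [] := by
    intro h
    apply hPne
    rw [← hω.1, h]
    rfl
  -- the improved simplification built from Jung centers
  set Γ' := ω.map (fun pr => (jungC pr.1).2.2) with hΓ'
  set ω' := ω.map (fun pr => (pr.1, [(jungC pr.1).2.2])) with hω'def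
  have hω' : IsPairedWalk ω' P Γ' := by
    refine ⟨?_, ?_, ?_⟩
    · rw [hω'def, List.map_map]
      have : (Prod.fst ∘ fun pr : List (Pt d) × List (Pt d) =>
          (pr.1, [(jungC pr.1).2.2])) = Prod.fst := by
        funext pr; rfl
      rw [this]; exact hω.1
    · rw [hω'def, List.map_map]
      have : (Prod.snd ∘ fun pr : List (Pt d) × List (Pt d) =>
          (pr.1, [(jungC pr.1).2.2])) = fun pr : List (Pt d) × List (Pt d) =>
          [(jungC pr.1).2.2] := by
        funext pr; rfl
      rw [this, flatten_singletons]
    · intro pr' hpr'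
      obtain ⟨pr, hpr, rfl⟩ := List.mem_map.1 hpr'
      exact ⟨(hω.2.2 pr hpr).1, by simp, Or.inr rfl⟩
  have hΓ'ne : Γ' ≠ [] := by
    rw [hΓ']
    simpa using hωne
  have hΓ'len : Γ'.length ≤ k := by
    have h1 : Γ'.length = ω.length := by rw [hΓ']; simp
    have h2 : ω.length ≤ Γ.length := by
      have := length_le_flatten_length (ω.map Prod.snd)
        (fun B hB => by
          obtain ⟨pr, hpr, rfl⟩ := List.mem_map.1 hB
          exact (hω.2.2 pr hpr).2.1)
      rw [hω.2.1] at this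
      simpa using this
    omega
  have hup : δ ≤ walkCost ω' := le_trans (hopt Γ' hΓ'ne hΓ'len) (dFr_le_walkCost hω')
  rcases walkCost_eq ω' with h0 | ⟨pr', hpr', he⟩
  · -- δ = 0
    have hδ0' : δ = 0 := le_antisymm (by rw [← h0]; exact hup) hδ0
    refine ⟨P.head hPne, P.head_mem hPne, P.head hPne, P.head_mem hPne, ?_, ?_⟩
    · simp [hδ0']
    · simp [hδ0']
  · obtain ⟨pr, hpr, rfl⟩ := List.mem_map.1 hpr'
    have hprne := hω.2.2 pr hpr
    set x := (jungC pr.1).1 with hxdef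
    set y := (jungC pr.1).2.1 with hydef
    obtain ⟨hxmem, hymem, hjspec⟩ := jungC_spec hprne.1
    have hxP : x ∈ P := mem_of_mem_block hω hpr hxmem
    have hyP : y ∈ P := mem_of_mem_block hω hpr hymem
    refine ⟨x, hxP, y, hyP, ?_, ?_⟩
    · -- lower bound: x and y are both within δ of a common point of Γ
      have hq : pr.2.head hprne.2.1 ∈ pr.2 := List.head_mem _
      have h1 : dist x (pr.2.head hprne.2.1) ≤ δ := by
        calc dist x (pr.2.head hprne.2.1) ≤ pairCost pr.1 pr.2 := dist_le_pairCost hxmem hq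
        _ ≤ walkCost ω := pairCost_le_walkCost hpr
        _ = δ := hcost
      have h2 : dist y (pr.2.head hprne.2.1) ≤ δ := by
        calc dist y (pr.2.head hprne.2.1) ≤ pairCost pr.1 pr.2 := dist_le_pairCost hymem hq
        _ ≤ walkCost ω := pairCost_le_walkCost hpr
        _ = δ := hcost
      have h3 : dist x y ≤ dist x (pr.2.head hprne.2.1) + dist (pr.2.head hprne.2.1) y :=
        dist_triangle _ _ _
      rw [dist_comm (pr.2.head hprne.2.1) y] at h3
      linarith
    · -- upper bound via the Jung center
      have hb : (0:ℝ) ≤ dist x y / Real.sqrt 2 := by positivity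
      have h4 : pairCost pr.1 [(jungC pr.1).2.2] ≤ dist x y / Real.sqrt 2 := by
        refine pairCost_le hb ?_
        intro p hp q hq
        rw [List.mem_singleton] at hq
        subst hq
        exact hjspec p hp
      have h5 : δ ≤ dist x y / Real.sqrt 2 := by
        calc δ ≤ walkCost ω' := hup
        _ = pairCost pr.1 [(jungC pr.1).2.2] := he
        _ ≤ dist x y / Real.sqrt 2 := h4
      have : (1 / Real.sqrt 2) * dist x y = dist x y / Real.sqrt 2 := by ring
      rw [this]
      exact h5
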